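/- The map Y_λ is monotone: for all symmetric 3×3 matrices T₁, T₂, one has (Y_λ(T₁) - Y_λ(T₂)) : (T₁ - T₂) ≥ 0. -/

import Mathlib

/-! `Y_λ = R ∘ P`, where `R x = (ψ |x| / |x|) x` is the radial map of the nondecreasing,
nonnegative profile `ψ r = (r - k)₊ / (2λ)`. As `Y_λ` takes trace-free values and `P` is the
orthogonal projection onto trace-free matrices, pairing with `T₁ - T₂` is the same as pairing with
`P T₁ - P T₂`. For a radial map, Cauchy–Schwarz `x : y ≤ |x| |y|` bounds
`(R x - R y) : (x - y)` below by `(ψ |x| - ψ |y|)(|x| - |y|) ≥ 0`. -/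

noncomputable section

/-- 3×3 real matrices. -/
abbrev Mat3 := Matrix (Fin 3) (Fin 3) ℝ

/-- Frobenius inner product `A : B = ∑ᵢⱼ Aᵢⱼ Bᵢⱼ` (equals `tr(ABᵀ)`, and `tr(AB)` for symmetric). -/
def finner (A B : Mat3) : ℝ := ∑ i, ∑ j, A i j * B i j

/-- Frobenius norm. -/
def fnorm (A : Mat3) : ℝ := Real.sqrt (finner A A)

/-- Deviatoric (trace-free) projection `P(T) = T - (tr T / 3)·Id`. -/
def dev (T : Mat3) : Mat3 := T - (Matrix.trace T / 3) • (1 : Mat3)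

/-- Yosida-type approximation `Y_λ(T) = ((|P(T)|-k)₊/(2λ))·P(T)/|P(T)|`, and `0` if `P(T) = 0`. -/
def Yos (k lam : ℝ) (T : Mat3) : Mat3 :=
  if dev T = 0 then 0
  else (max (fnorm (dev T) - k) 0 / (2 * lam) * (fnorm (dev T))⁻¹) • dev T

open RealInnerProductSpace

section Radial

variable {E : Type*} [NormedAddCommGroup E] [InnerProductSpace ℝ E]

-- At `x = 0` the junk value `ψ 0 / 0 = 0` makes this `0`, the convention of `Yos`.
def radialMap (ψ : ℝ → ℝ) (x : E) : E := (ψ ‖x‖ / ‖x‖) • x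

theorem inner_radialMap_sub_radialMap_nonneg {ψ : ℝ → ℝ} (hψ : MonotoneOn ψ (Set.Ici 0))
    (hψ₀ : ∀ r, 0 ≤ r → 0 ≤ ψ r) (x y : E) :
    0 ≤ ⟪radialMap ψ x - radialMap ψ y, x - y⟫ := by
  set a := ‖x‖
  set b := ‖y‖
  have ha : 0 ≤ a := norm_nonneg x
  have hb : 0 ≤ b := norm_nonneg y
  set u := ψ a / a
  set v := ψ b / b
  have hu : 0 ≤ u := div_nonneg (hψ₀ a ha) ha
  have hv : 0 ≤ v := div_nonneg (hψ₀ b hb) hb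
  have hexpand : ⟪radialMap ψ x - radialMap ψ y, x - y⟫
      = u * a ^ 2 + v * b ^ 2 - (u + v) * ⟪x, y⟫ := by
    simp only [radialMap, inner_sub_left, inner_sub_right, real_inner_smul_left,
      real_inner_self_eq_norm_sq, real_inner_comm x y]
    ring
  have hcs : (u + v) * ⟪x, y⟫ ≤ (u + v) * (a * b) :=
    mul_le_mul_of_nonneg_left (real_inner_le_norm x y) (add_nonneg hu hv)
  have hmono : 0 ≤ (u * a - v * b) * (a - b) := by
    obtain ha0 | ha' := ha.eq_or_lt
    · rw [← ha0]; nlinarith [mul_nonneg hv (mul_nonneg hb hb)]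
    obtain hb0 | hb' := hb.eq_or_lt
    · rw [← hb0]; nlinarith [mul_nonneg hu (mul_nonneg ha ha)]
    rw [div_mul_cancel₀ _ ha'.ne', div_mul_cancel₀ _ hb'.ne']
    rcases le_total a b with hab | hab
    · exact mul_nonneg_of_nonpos_of_nonpos (sub_nonpos.2 (hψ ha hb hab)) (sub_nonpos.2 hab)
    · exact mul_nonneg (sub_nonneg.2 (hψ hb ha hab)) (sub_nonneg.2 hab)
  nlinarith

end Radial

def yosidaProfile (k lam r : ℝ) : ℝ := max (r - k) 0 / (2 * lam)

theorem monotone_yosidaProfile (k : ℝ) {lam : ℝ} (hlam : 0 ≤ lam) :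
    Monotone (yosidaProfile k lam) := fun _ _ h =>
  div_le_div_of_nonneg_right (max_le_max (sub_le_sub_right h k) le_rfl) (by positivity)

theorem yosidaProfile_nonneg (k : ℝ) {lam : ℝ} (hlam : 0 ≤ lam) (r : ℝ) :
    0 ≤ yosidaProfile k lam r :=
  div_nonneg (le_max_right _ _) (by positivity)

def flat : Mat3 →ₗ[ℝ] EuclideanSpace ℝ (Fin 3 × Fin 3) where
  toFun A := WithLp.toLp 2 fun p => A p.1 p.2
  map_add' _ _ := by ext; simp
  map_smul' _ _ := by ext; simp

theorem finner_eq_inner (A B : Mat3) : finner A B = ⟪flat A, flat B⟫ := by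
  simp [finner, flat, PiLp.inner_apply, Fintype.sum_prod_type, mul_comm]

theorem fnorm_eq_norm (A : Mat3) : fnorm A = ‖flat A‖ := by
  rw [fnorm, finner_eq_inner, norm_eq_sqrt_real_inner]

theorem finner_one_right (A : Mat3) : finner A 1 = Matrix.trace A := by
  simp [finner, Matrix.one_apply, Matrix.trace]

theorem finner_dev_right_of_trace_eq_zero {Y : Mat3} (hY : Matrix.trace Y = 0) (T : Mat3) :
    finner Y (dev T) = finner Y T := by
  rw [dev, finner_eq_inner, map_sub, map_smul, inner_sub_right, real_inner_smul_right,
    ← finner_eq_inner, ← finner_eq_inner, finner_one_right, hY, mul_zero, sub_zero]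

theorem dev_sub (A B : Mat3) : dev (A - B) = dev A - dev B := by
  simp only [dev, Matrix.trace_sub, sub_div, sub_smul]
  abel

theorem trace_dev (T : Mat3) : Matrix.trace (dev T) = 0 := by
  simp [dev]

theorem Yos_eq_smul_dev (k lam : ℝ) (T : Mat3) :
    Yos k lam T = (yosidaProfile k lam (fnorm (dev T)) / fnorm (dev T)) • dev T := by
  unfold Yos
  split_ifs with h
  · simp [h]
  · rw [yosidaProfile, div_eq_mul_inv _ (fnorm _)]

theorem trace_Yos (k lam : ℝ) (T : Mat3) : Matrix.trace (Yos k lam T) = 0 := by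
  rw [Yos_eq_smul_dev, Matrix.trace_smul, trace_dev, smul_zero]

theorem flat_Yos (k lam : ℝ) (T : Mat3) :
    flat (Yos k lam T) = radialMap (yosidaProfile k lam) (flat (dev T)) := by
  rw [Yos_eq_smul_dev, map_smul, radialMap, fnorm_eq_norm]

theorem Yos_monotone_general (k lam : ℝ) (hlam : 0 < lam) (T₁ T₂ : Mat3) :
    0 ≤ finner (Yos k lam T₁ - Yos k lam T₂) (T₁ - T₂) := by
  have htrace : Matrix.trace (Yos k lam T₁ - Yos k lam T₂) = 0 := by
    rw [Matrix.trace_sub, trace_Yos, trace_Yos, sub_zero]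
  rw [← finner_dev_right_of_trace_eq_zero htrace, dev_sub, finner_eq_inner, map_sub, map_sub,
    flat_Yos, flat_Yos]
  exact inner_radialMap_sub_radialMap_nonneg ((monotone_yosidaProfile k hlam.le).monotoneOn _)
    (fun r _ => yosidaProfile_nonneg k hlam.le r) _ _

/-- `Y_λ` is monotone: `(Y_λ(T₁) - Y_λ(T₂)) : (T₁ - T₂) ≥ 0`. -/
theorem Yos_monotone (k lam : ℝ) (hk : 0 < k) (hlam : 0 < lam) (T₁ T₂ : Mat3) :
    0 ≤ finner (Yos k lam T₁ - Yos k lam T₂) (T₁ - T₂) :=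
  Yos_monotone_general k lam hlam T₁ T₂
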